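/- In a simply laced reduced irreducible crystallographic root system, the Coxeter length of the reflection s_α associated to a positive root α equals 2·ht(α) − 1, where ht(α) is the height of α. -/

import Mathlib

open scoped RealInnerProductSpace Pointwise

namespace Paper

variable {V : Type*} [NormedAddCommGroup V] [InnerProductSpace ℝ V]

/-- The orthogonal reflection in the hyperplane perpendicular to `α`
(by convention the identity if `α = 0`). -/
noncomputable def sref (α : V) : V ≃ₗ[ℝ] V :=
  letI := Classical.propDecidable (α = 0)
  if h : α = 0 then LinearEquiv.refl ℝ V
  else
    Module.reflection (x := α) (f := (2 / ⟪α, α⟫) • (innerₛₗ ℝ α)) <| by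
      have h' : ⟪α, α⟫ ≠ 0 := inner_self_ne_zero.mpr h
      have h2 : ((2 / ⟪α, α⟫) • (innerₛₗ ℝ α)) α = (2 / ⟪α, α⟫) * ⟪α, α⟫ := by
        simp
      rw [h2, div_mul_cancel₀ _ h']

/-- `Φ` is a (finite, reduced, crystallographic) root system in the real inner
product space `V`. -/
structure IsRootSystem (Φ : Set V) : Prop where
  finite : Φ.Finite
  nonzero : (0 : V) ∉ Φ
  span_top : Submodule.span ℝ Φ = ⊤
  neg_mem : ∀ α ∈ Φ, -α ∈ Φ
  refl_mem : ∀ α ∈ Φ, ∀ β ∈ Φ, sref α β ∈ Φ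
  crystallographic : ∀ α ∈ Φ, ∀ β ∈ Φ, ∃ m : ℤ, 2 * ⟪α, β⟫ / ⟪β, β⟫ = (m : ℝ)
  reduced : ∀ α ∈ Φ, ∀ t : ℝ, t • α ∈ Φ → t = 1 ∨ t = -1

/-- Irreducibility of a root system. -/
def IsIrreducible (Φ : Set V) : Prop :=
  ∀ Φ₁ Φ₂ : Set V, Φ = Φ₁ ∪ Φ₂ → (∀ α ∈ Φ₁, ∀ β ∈ Φ₂, ⟪α, β⟫ = 0) →
    Φ₁ = ∅ ∨ Φ₂ = ∅

/-- `αs` is a system of simple roots for `Φ`, with corresponding set `Pos` of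
positive roots. -/
structure IsBase {n : ℕ} (Φ : Set V) (αs : Fin n → V) (Pos : Set V) : Prop where
  mem : ∀ i, αs i ∈ Φ
  indep : LinearIndependent ℝ αs
  span_eq : Submodule.span ℝ (Set.range αs) = ⊤
  pos_subset : Pos ⊆ Φ
  mem_pos_iff : ∀ β ∈ Φ, (β ∈ Pos ↔ ∃ c : Fin n → ℕ, β = ∑ i, (c i : ℝ) • αs i)
  pos_or_neg : ∀ β ∈ Φ, β ∈ Pos ∨ -β ∈ Pos

/-- The Weyl group of `Φ`: the subgroup of `GL(V)` generated by the reflections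
in the roots. -/
noncomputable def weylGroup (Φ : Set V) : Subgroup (V ≃ₗ[ℝ] V) :=
  Subgroup.closure (sref '' Φ)

/-- The standard parabolic subgroup generated by the simple reflections `sref (αs i)`
for `i ∈ J`. -/
noncomputable def parab {n : ℕ} (αs : Fin n → V) (J : Set (Fin n)) :
    Subgroup (V ≃ₗ[ℝ] V) :=
  Subgroup.closure ((fun i => sref (αs i)) '' J)

/-- The inversion set `Φ(w) = {β ∈ Φ⁺ : w⁻¹ β ∈ −Φ⁺}`. -/
def invSet (Pos : Set V) (w : V ≃ₗ[ℝ] V) : Set V :=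
  {β ∈ Pos | -(w⁻¹ β) ∈ Pos}

/-- The length of a Weyl group element, as the number of inversions. -/
noncomputable def len (Pos : Set V) (w : V ≃ₗ[ℝ] V) : ℕ :=
  (invSet Pos w).ncard

/-- `φ` is the highest root of the positive system `Pos` with simple roots `αs`. -/
def IsHighestRoot {n : ℕ} (αs : Fin n → V) (Pos : Set V) (φ : V) : Prop :=
  φ ∈ Pos ∧ ∀ β ∈ Pos, ∃ c : Fin n → ℕ, φ - β = ∑ i, (c i : ℝ) • αs i

/-- Adjacency in the Bourbaki-labelled Dynkin diagram of the `E`-series (nodes `1,…,8`). -/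
def eAdj (i j : ℕ) : Prop :=
  (i, j) ∈ ([(1,3),(3,1),(3,4),(4,3),(4,5),(5,4),(5,6),(6,5),(6,7),(7,6),(7,8),(8,7),(2,4),(4,2)] :
    List (ℕ × ℕ))

instance (i j : ℕ) : Decidable (eAdj i j) := by unfold eAdj; infer_instance

/-- Cartan integers of the `E`-series (Bourbaki labelling, nodes `1,…,8`):
`E₆`, `E₇` and `E₈` are obtained by restricting to nodes `1,…,n`. -/
def cartanE (i j : ℕ) : ℝ :=
  if i = j then 2 else if eAdj i j then -1 else 0

/-- Cartan integers of `F₄` (Bourbaki labelling, nodes `1,…,4`; `α₁, α₂` long,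
`α₃, α₄` short), with the convention `C i j = 2(αᵢ,αⱼ)/(αⱼ,αⱼ)`. -/
def cartanF (i j : ℕ) : ℝ :=
  if i = j then 2 else
  if (i, j) ∈ ([(1,2),(2,1),(3,2),(3,4),(4,3)] : List (ℕ × ℕ)) then -1 else
  if (i, j) = (2,3) then -2 else 0

/-- Cartan integers of `Aₙ` (nodes `1,…,n`). -/
def cartanA (i j : ℕ) : ℝ :=
  if i = j then 2 else if i + 1 = j ∨ j + 1 = i then -1 else 0

/-- The simple roots `αs` realise the Cartan matrix `C` (indexed by nodes `1,…,n`). -/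
def CartanIs {n : ℕ} (αs : Fin n → V) (C : ℕ → ℕ → ℝ) : Prop :=
  ∀ i j : Fin n, 2 * ⟪αs i, αs j⟫ / ⟪αs j, αs j⟫ = C ((i : ℕ) + 1) ((j : ℕ) + 1)



section Aux

variable {n : ℕ} {Φ : Set V} {αs : Fin n → V} {Pos : Set V}

lemma sref_apply {x : V} (hx : x ≠ 0) (y : V) :
    sref x y = y - (2 / ⟪x,x⟫ * ⟪x,y⟫) • x := by
  rw [sref, dif_neg hx, Module.reflection_apply]
  simp

lemma sref_self {x : V} (hx : x ≠ 0) : sref x x = -x := by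
  rw [sref, dif_neg hx, Module.reflection_apply_self]

lemma sref_sref (x : V) (y : V) : sref x (sref x y) = y := by
  by_cases hx : x = 0
  · simp [sref, dif_pos hx]
  · rw [sref, dif_neg hx]
    exact Module.involutive_reflection _ y

lemma sref_inv (x : V) : (sref x)⁻¹ = sref x := by
  by_cases hx : x = 0
  · simp [sref, dif_pos hx]; rfl
  · rw [sref, dif_neg hx]; rfl

lemma coeffs_zero (hbase : IsBase Φ αs Pos) {g : Fin n → ℝ}
    (hg : ∑ i, g i • αs i = 0) : ∀ i, g i = 0 :=
  fun i => Fintype.linearIndependent_iff.mp hbase.indep g hg i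

lemma not_pos_neg (hΦ : IsRootSystem Φ) (hbase : IsBase Φ αs Pos) {x : V}
    (hx : x ∈ Pos) (hx' : -x ∈ Pos) : False := by
  obtain ⟨c, hc⟩ := (hbase.mem_pos_iff x (hbase.pos_subset hx)).mp hx
  obtain ⟨d, hd⟩ := (hbase.mem_pos_iff _ (hbase.pos_subset hx')).mp hx'
  have hsum : ∑ i, ((c i : ℝ) + d i) • αs i = 0 := by
    simp only [add_smul]
    rw [Finset.sum_add_distrib, ← hc, ← hd, add_neg_cancel]
  have h0 := coeffs_zero hbase hsum
  have hx0 : x = 0 := by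
    rw [hc]
    apply Finset.sum_eq_zero
    intro i _
    have h1 := h0 i
    have h2 : (c i : ℝ) = 0 := by
      have := (c i).cast_nonneg (α := ℝ)
      have := (d i).cast_nonneg (α := ℝ)
      linarith
    rw [h2, zero_smul]
  exact hΦ.nonzero (hx0 ▸ hbase.pos_subset hx)

lemma simple_pos (hbase : IsBase Φ αs Pos) (i : Fin n) : αs i ∈ Pos := by
  refine (hbase.mem_pos_iff _ (hbase.mem i)).mpr ⟨fun j => if j = i then 1 else 0, ?_⟩
  rw [Finset.sum_eq_single i]
  · simp
  · intro j _ hj; simp [hj]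
  · simp

lemma cinteger (hΦ : IsRootSystem Φ)
    (hsl : ∀ a ∈ Φ, ∀ b ∈ Φ, ⟪a, a⟫ = ⟪b, b⟫)
    {x y : V} (hx : x ∈ Φ) (hy : y ∈ Φ) :
    ∃ m : ℤ, 2 * ⟪x, y⟫ / ⟪y, y⟫ = (m : ℝ) ∧ m ≤ 2 ∧ (m = 2 → x = y) := by
  obtain ⟨m, hm⟩ := hΦ.crystallographic x hx y hy
  have hy0 : y ≠ 0 := fun h => hΦ.nonzero (h ▸ hy)
  have hN : (0:ℝ) < ⟪y, y⟫ :=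
    lt_of_le_of_ne real_inner_self_nonneg (Ne.symm (inner_self_ne_zero.mpr hy0))
  have hxx : ⟪x, x⟫ = ⟪y, y⟫ := hsl x hx y hy
  have hmm : 2 * ⟪x, y⟫ = (m : ℝ) * ⟪y, y⟫ := by
    field_simp at hm; linarith
  have he : ⟪x - y, x - y⟫ = ⟪x,x⟫ - 2*⟪x,y⟫ + ⟪y,y⟫ := by
    rw [inner_sub_left, inner_sub_right, inner_sub_right, real_inner_comm y x]; ring
  have hnn : (0:ℝ) ≤ ⟪x - y, x - y⟫ := real_inner_self_nonneg
  have hm2 : (m:ℝ) ≤ 2 := by nlinarith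
  refine ⟨m, hm, by exact_mod_cast hm2, fun h2 => ?_⟩
  have : ⟪x - y, x - y⟫ = 0 := by
    rw [he, hxx]
    rw [h2] at hmm
    push_cast at hmm
    linarith
  have := inner_self_eq_zero.mp this
  rw [sub_eq_zero] at this
  exact this

lemma sref_simple_mem (hΦ : IsRootSystem Φ) (hbase : IsBase Φ αs Pos) (i : Fin n)
    {γ : V} (hγ : γ ∈ Pos) (hne : γ ≠ αs i) : sref (αs i) γ ∈ Pos := by
  have hαΦ := hbase.mem i
  have hα0 : αs i ≠ 0 := fun h => hΦ.nonzero (h ▸ hαΦ)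
  have hγΦ := hbase.pos_subset hγ
  have hsΦ : sref (αs i) γ ∈ Φ := hΦ.refl_mem _ hαΦ _ hγΦ
  rcases hbase.pos_or_neg _ hsΦ with h | h
  · exact h
  · exfalso
    obtain ⟨d, hd⟩ := (hbase.mem_pos_iff _ hγΦ).mp hγ
    obtain ⟨e, he⟩ := (hbase.mem_pos_iff _ (hbase.pos_subset h)).mp h
    set t : ℝ := 2 / ⟪αs i, αs i⟫ * ⟪αs i, γ⟫ with ht
    have hs : sref (αs i) γ = γ - t • αs i := sref_apply hα0 γ
    have h1 : (∑ j, (d j:ℝ) • αs j) + (∑ j, (e j:ℝ) • αs j) = t • αs i := by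
      rw [← hd, ← he, hs]
      abel
    have key : ∑ j, (((d j:ℝ) + e j) - (if j = i then t else 0)) • αs j = 0 := by
      simp only [sub_smul, add_smul, ite_smul, zero_smul]
      rw [Finset.sum_sub_distrib, Finset.sum_add_distrib, h1, Finset.sum_ite_eq']
      simp
    have h0 := coeffs_zero hbase key
    have hdz : ∀ j, j ≠ i → d j = 0 := by
      intro j hj
      have := h0 j
      simp only [if_neg hj, sub_zero] at this
      have h2 : (0:ℝ) ≤ (d j : ℝ) := (d j).cast_nonneg
      have h3 : (0:ℝ) ≤ (e j : ℝ) := (e j).cast_nonneg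
      have h4 : (d j : ℝ) = 0 := by linarith
      exact_mod_cast h4
    have hγeq : γ = (d i : ℝ) • αs i := by
      rw [hd, Finset.sum_eq_single i]
      · intro j _ hj; rw [Nat.cast_eq_zero.mpr (hdz j hj), zero_smul]
      · simp
    rcases hΦ.reduced _ hαΦ (d i) (by rw [← hγeq]; exact hγΦ) with h1' | h1'
    · exact hne (by rw [hγeq, h1', one_smul])
    · have : (0:ℝ) ≤ (d i : ℝ) := (d i).cast_nonneg
      linarith [this, h1'.ge, h1'.le]

lemma rho_inner (hΦ : IsRootSystem Φ) (hbase : IsBase Φ αs Pos)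
    (P : Finset V) (hP : ∀ x, x ∈ P ↔ x ∈ Pos) (i : Fin n) :
    ⟪αs i, ∑ γ ∈ P, γ⟫ = ⟪αs i, αs i⟫ := by
  classical
  have hαΦ := hbase.mem i
  have hα0 : αs i ≠ 0 := fun h => hΦ.nonzero (h ▸ hαΦ)
  have hαP : αs i ∈ P := (hP _).mpr (simple_pos hbase i)
  set ρ : V := ∑ γ ∈ P, γ with hρ
  have hmem : ∀ γ ∈ P.erase (αs i), sref (αs i) γ ∈ P.erase (αs i) := by
    intro γ hγ
    obtain ⟨hne, hγP⟩ := Finset.mem_erase.mp hγ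
    have h1 : sref (αs i) γ ∈ Pos := sref_simple_mem hΦ hbase i ((hP _).mp hγP) hne
    refine Finset.mem_erase.mpr ⟨?_, (hP _).mpr h1⟩
    intro heq
    have : γ = -(αs i) := by
      have := sref_sref (αs i) γ
      rw [heq, sref_self hα0] at this
      exact this.symm
    exact not_pos_neg hΦ hbase (simple_pos hbase i)
      (by rw [← this]; exact (hP _).mp hγP)
  have h1 : sref (αs i) ρ = ρ - (2:ℝ) • αs i := by
    have hmap : sref (αs i) ρ = ∑ γ ∈ P, sref (αs i) γ := map_sum _ _ _
    rw [hmap, ← Finset.add_sum_erase _ _ hαP, sref_self hα0]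
    have hbij : ∑ γ ∈ P.erase (αs i), sref (αs i) γ = ∑ γ ∈ P.erase (αs i), γ := by
      apply Finset.sum_nbij' (fun γ => sref (αs i) γ) (fun γ => sref (αs i) γ)
      · exact hmem
      · exact hmem
      · intro γ _; exact sref_sref _ _
      · intro γ _; exact sref_sref _ _
      · intro γ _; rfl
    rw [hbij, hρ, ← Finset.add_sum_erase _ _ hαP]
    module
  have h2 : sref (αs i) ρ = ρ - (2 / ⟪αs i, αs i⟫ * ⟪αs i, ρ⟫) • αs i :=
    sref_apply hα0 ρ
  have h3 : (2 / ⟪αs i, αs i⟫ * ⟪αs i, ρ⟫ - (2:ℝ)) • αs i = 0 := by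
    rw [sub_smul]
    have h4 : ρ - (2:ℝ) • αs i = ρ - (2 / ⟪αs i, αs i⟫ * ⟪αs i, ρ⟫) • αs i := by
      rw [← h1, ← h2]
    have h5 : (2 / ⟪αs i, αs i⟫ * ⟪αs i, ρ⟫) • αs i = (2:ℝ) • αs i := by
      have := sub_right_injective h4
      exact this.symm
    rw [h5, sub_self]
  have h6 : 2 / ⟪αs i, αs i⟫ * ⟪αs i, ρ⟫ - (2:ℝ) = 0 := by
    rcases smul_eq_zero.mp h3 with h | h
    · exact h
    · exact absurd h hα0
  have hNa : ⟪αs i, αs i⟫ ≠ 0 := inner_self_ne_zero.mpr hα0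
  field_simp at h6
  linarith

end Aux

theorem statement2 {n : ℕ} (Φ : Set V) (hΦ : IsRootSystem Φ) (hirr : IsIrreducible Φ)
    (hsl : ∀ a ∈ Φ, ∀ b ∈ Φ, ⟪a, a⟫ = ⟪b, b⟫)
    (αs : Fin n → V) (Pos : Set V) (hbase : IsBase Φ αs Pos)
    (β : V) (hβ : β ∈ Pos) (c : Fin n → ℕ) (hc : β = ∑ i, (c i : ℝ) • αs i) :
    len Pos (sref β) = 2 * (∑ i, c i) - 1 := by
  classical
  have hβΦ : β ∈ Φ := hbase.pos_subset hβ
  have hβ0 : β ≠ 0 := fun h => hΦ.nonzero (h ▸ hβΦ)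
  have hNpos : (0:ℝ) < ⟪β,β⟫ :=
    lt_of_le_of_ne real_inner_self_nonneg (Ne.symm (inner_self_ne_zero.mpr hβ0))
  have hNne : ⟪β,β⟫ ≠ 0 := ne_of_gt hNpos
  set P : Finset V := (hΦ.finite.subset hbase.pos_subset).toFinset with hPdef
  have hP : ∀ x, x ∈ P ↔ x ∈ Pos := fun x => Set.Finite.mem_toFinset _
  set f : V → ℝ := fun γ => 2 * ⟪γ, β⟫ / ⟪β,β⟫ with hf
  have hsapp : ∀ y, sref β y = y - f y • β := by
    intro y
    rw [sref_apply hβ0 y]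
    have hfy : f y = 2 / ⟪β,β⟫ * ⟪β,y⟫ := by
      simp only [hf]
      rw [real_inner_comm y β]
      ring
    rw [hfy]
  -- basic consequences
  have hnegβ : sref β β = -β := sref_self hβ0
  have hβP : β ∈ P := (hP β).mpr hβ
  set T : Finset V := P.filter (fun γ => -(sref β γ) ∈ Pos) with hTdef
  have hlen : len Pos (sref β) = T.card := by
    rw [len, ← Set.ncard_coe_finset]
    congr 1
    ext x
    simp only [invSet, Set.mem_setOf_eq, Finset.coe_filter, hP, sref_inv,
      Finset.mem_coe, Finset.mem_filter, hTdef]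
  have hβT : β ∈ T := by
    refine Finset.mem_filter.mpr ⟨hβP, ?_⟩
    simp only [hnegβ, neg_neg]
    exact hβ
  set A1 : Finset V := (P.erase β).filter (fun γ => -(sref β γ) ∈ Pos) with hA1def
  set B : Finset V := (P.erase β).filter (fun γ => ¬(-(sref β γ) ∈ Pos)) with hBdef
  have hTA1 : T.erase β = A1 := by
    ext x
    simp only [hTdef, hA1def, Finset.mem_erase, Finset.mem_filter]
    tauto
  have hcardT : T.card = A1.card + 1 := by
    rw [← hTA1, Finset.card_erase_of_mem hβT]
    have h1 : 1 ≤ T.card := Finset.card_pos.mpr ⟨β, hβT⟩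
    omega
  -- f β = 2
  have hfβ : f β = 2 := by
    rw [hf]
    field_simp
  -- every element of A1 has f = 1
  have hA1one : ∀ γ ∈ A1, f γ = 1 := by
    intro γ hγm
    obtain ⟨hme, hinv⟩ := Finset.mem_filter.mp hγm
    obtain ⟨hneβ, hγP⟩ := Finset.mem_erase.mp hme
    have hγPos := (hP γ).mp hγP
    have hγΦ := hbase.pos_subset hγPos
    obtain ⟨m, hm, hm2, hm2'⟩ := cinteger hΦ hsl hγΦ hβΦ
    have hfm : f γ = (m:ℝ) := hm
    have hm1 : 1 ≤ m := by
      by_contra hlt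
      push_neg at hlt
      have hm0 : m ≤ 0 := by omega
      set k : ℕ := (-m).toNat with hk
      have hkm : (k:ℝ) = -(m:ℝ) := by
        rw [hk]
        have : ((-m).toNat : ℤ) = -m := Int.toNat_of_nonneg (by omega)
        exact_mod_cast this
      have hsγ : sref β γ = γ + (k:ℝ) • β := by
        rw [hsapp γ, hfm, hkm, neg_smul, sub_eq_add_neg]
      have hsΦ : sref β γ ∈ Φ := hΦ.refl_mem _ hβΦ _ hγΦ
      obtain ⟨d, hd⟩ := (hbase.mem_pos_iff _ hγΦ).mp hγPos
      have hsPos : sref β γ ∈ Pos := by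
        refine (hbase.mem_pos_iff _ hsΦ).mpr ⟨fun j => d j + k * c j, ?_⟩
        rw [hsγ]
        conv_lhs => rw [hd, hc]
        rw [Finset.smul_sum, ← Finset.sum_add_distrib]
        apply Finset.sum_congr rfl
        intro j _
        rw [smul_smul]
        push_cast
        rw [add_smul]
      exact not_pos_neg hΦ hbase hsPos hinv
    have hmeq : m = 1 ∨ m = 2 := by omega
    rcases hmeq with h1 | h1
    · rw [hfm, h1]; norm_num
    · exact absurd (hm2' h1) hneβ
  -- sum over B is zero
  have hBzero : ∑ γ ∈ B, f γ = 0 := by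
    have hBmem : ∀ γ ∈ B, sref β γ ∈ B := by
      intro γ hγm
      obtain ⟨hme, hninv⟩ := Finset.mem_filter.mp hγm
      obtain ⟨hneβ, hγP⟩ := Finset.mem_erase.mp hme
      have hγPos := (hP γ).mp hγP
      have hγΦ := hbase.pos_subset hγPos
      have hsΦ : sref β γ ∈ Φ := hΦ.refl_mem _ hβΦ _ hγΦ
      have hsPos : sref β γ ∈ Pos := by
        rcases hbase.pos_or_neg _ hsΦ with h | h
        · exact h
        · exact absurd h hninv
      refine Finset.mem_filter.mpr ⟨Finset.mem_erase.mpr ⟨?_, (hP _).mpr hsPos⟩, ?_⟩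
      · intro heq
        have hγeq : γ = -β := by
          have := sref_sref β γ
          rw [heq, hnegβ] at this
          exact this.symm
        exact not_pos_neg hΦ hbase hβ (by rw [← hγeq]; exact hγPos)
      · rw [sref_sref β γ]
        exact fun hcon => not_pos_neg hΦ hbase hγPos hcon
    refine Finset.sum_involution (fun γ _ => sref β γ) ?_ ?_ hBmem ?_
    · intro γ _
      have : f (sref β γ) = -(f γ) := by
        rw [hsapp γ, hf]
        simp only [inner_sub_left, real_inner_smul_left]
        field_simp
        ring
      rw [this]
      ring
    · intro γ _ hfγ heq
      apply hfγ
      have heq' : sref β γ = γ := heq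
      have h0 : f γ • β = 0 := by
        have := hsapp γ
        rw [heq'] at this
        have h1 := sub_eq_self.mp this.symm
        exact h1
      rcases smul_eq_zero.mp h0 with h | h
      · exact h
      · exact absurd h hβ0
    · intro γ _
      exact sref_sref β γ
  -- total sum
  have hrho : ∑ γ ∈ P, f γ = 2 * (∑ i, (c i:ℝ)) := by
    rw [hf]
    rw [← Finset.sum_div, ← Finset.mul_sum, ← sum_inner]
    have h2 : ⟪∑ γ ∈ P, γ, β⟫ = (∑ i, (c i:ℝ)) * ⟪β,β⟫ := by
      conv_lhs => rw [hc]
      rw [inner_sum, Finset.sum_mul]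
      apply Finset.sum_congr rfl
      intro i _
      rw [real_inner_smul_right, real_inner_comm, rho_inner hΦ hbase P hP i,
        hsl (αs i) (hbase.mem i) β hβΦ]
    rw [h2]
    field_simp
  have hsplit : ∑ γ ∈ P, f γ = f β + (∑ γ ∈ A1, f γ + ∑ γ ∈ B, f γ) := by
    rw [← Finset.add_sum_erase _ f hβP]
    congr 1
    rw [← Finset.sum_filter_add_sum_filter_not (P.erase β) (fun γ => -(sref β γ) ∈ Pos) f]
  have hA1sum : ∑ γ ∈ A1, f γ = (A1.card : ℝ) := by
    rw [Finset.sum_congr rfl hA1one, Finset.sum_const, nsmul_eq_mul, mul_one]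
  have hreal : (A1.card : ℝ) + 2 = 2 * (∑ i, (c i:ℝ)) := by
    rw [← hrho, hsplit, hfβ, hA1sum, hBzero]
    ring
  have hnat : A1.card + 2 = 2 * (∑ i, c i) := by
    have h9 : ((A1.card + 2 : ℕ) : ℝ) = ((2 * (∑ i, c i) : ℕ) : ℝ) := by
      push_cast
      linarith [hreal]
    exact_mod_cast h9
  rw [hlen, hcardT]
  omega


end Paper
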